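/- arXiv:1308.5391 — 2 statements merged into one kernel-verified Lean document; each statement's English description precedes it below -/
import Mathlib

section
/- Let Λ ⊆ ℝ^d be a bounded open set, v₀ : ℝ^d → ℝ bounded measurable, and let t ≥ max{‖v₀‖_∞, 1 + C₀ θ ‖g₁‖_∞}. Then for every v ∈ H^s_loc(ℝ^d) ∩ L^∞(ℝ^d) with v = v₀ on ℝ^d∖Λ, writing v^t = min(t, max(v, −t)) and Λ_t = {y ∈ Λ : |v(y)| > t}, one has G₁^{v₀}(v, Λ) − G₁^{v₀}(v^t, Λ) ≥ ∫_{Λ_t} ( C₀^{-1}(t − 1) − θ‖g₁‖_∞ ) (|v(y)| − t) dy. In particular, every v₀-minimizer u of G₁ in Λ satisfies |u| ≤ max{‖v₀‖_∞, 1 + C₀ θ ‖g₁‖_∞} almost everywhere. -/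
open MeasureTheory Set Filter Topology
open scoped ENNReal Topology NNReal

noncomputable section

abbrev Rd (d : ℕ) : Type := EuclideanSpace ℝ (Fin d)

/-- The Gagliardo double integral of `v` over `Λ × Λ`. -/
def gag (d : ℕ) (s : ℝ) (v : Rd d → ℝ) (Λ : Set (Rd d)) : ℝ≥0∞ :=
  ∫⁻ x in Λ, ∫⁻ y in Λ, ENNReal.ofReal ((v x - v y) ^ 2 / ‖x - y‖ ^ ((d : ℝ) + 2 * s))

/-- The interaction `𝒲((v,Λ),(u,Λ₁))`. -/
def interW (d : ℕ) (s : ℝ) (v : Rd d → ℝ) (Λ : Set (Rd d)) (u : Rd d → ℝ)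
    (Λ₁ : Set (Rd d)) : ℝ≥0∞ :=
  2 * ∫⁻ x in Λ, ∫⁻ y in Λ₁, ENNReal.ofReal ((v x - u y) ^ 2 / ‖x - y‖ ^ ((d : ℝ) + 2 * s))

/-- `𝒲(v,Λ) = 𝒲((v,Λ),(v,ℝ^d∖Λ))`. -/
def bigW (d : ℕ) (s : ℝ) (v : Rd d → ℝ) (Λ : Set (Rd d)) : ℝ≥0∞ :=
  interW d s v Λ v Λᶜ

/-- The local free energy `K₁(v,Λ)`, with values in the extended reals. -/
def K1e (d : ℕ) (s : ℝ) (W : ℝ → ℝ) (θ : ℝ) (g₁ : Rd d → ℝ) (v : Rd d → ℝ)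
    (Λ : Set (Rd d)) : EReal :=
  (gag d s v Λ : EReal) + (((∫ x in Λ, W (v x)) : ℝ) : EReal)
    - (((θ * ∫ x in Λ, g₁ x * v x) : ℝ) : EReal)

/-- `G₁(v,Λ) = K₁(v,Λ) + 𝒲(v,Λ)`, with values in the extended reals. -/
def G1e (d : ℕ) (s : ℝ) (W : ℝ → ℝ) (θ : ℝ) (g₁ : Rd d → ℝ) (v : Rd d → ℝ)
    (Λ : Set (Rd d)) : EReal :=
  K1e d s W θ g₁ v Λ + (bigW d s v Λ : EReal)

/-- `G₁^{v₀}(v,Λ) = K₁(v,Λ) + 𝒲((v,Λ),(v₀,ℝ^d∖Λ))`, with values in the extended reals. -/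
def G1bce (d : ℕ) (s : ℝ) (W : ℝ → ℝ) (θ : ℝ) (g₁ : Rd d → ℝ) (v₀ : Rd d → ℝ)
    (v : Rd d → ℝ) (Λ : Set (Rd d)) : EReal :=
  K1e d s W θ g₁ v Λ + (interW d s v Λ v₀ Λᶜ : EReal)

/-- Real-valued version of `K₁`. -/
def K1r (d : ℕ) (s : ℝ) (W : ℝ → ℝ) (θ : ℝ) (g₁ : Rd d → ℝ) (v : Rd d → ℝ)
    (Λ : Set (Rd d)) : ℝ :=
  (gag d s v Λ).toReal + (∫ x in Λ, W (v x)) - θ * ∫ x in Λ, g₁ x * v x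

/-- Real-valued version of `G₁`. -/
def G1r (d : ℕ) (s : ℝ) (W : ℝ → ℝ) (θ : ℝ) (g₁ : Rd d → ℝ) (v : Rd d → ℝ)
    (Λ : Set (Rd d)) : ℝ :=
  K1r d s W θ g₁ v Λ + (bigW d s v Λ).toReal

/-- Real-valued version of `G₁^{v₀}`. -/
def G1bcr (d : ℕ) (s : ℝ) (W : ℝ → ℝ) (θ : ℝ) (g₁ : Rd d → ℝ) (v₀ : Rd d → ℝ)
    (v : Rd d → ℝ) (Λ : Set (Rd d)) : ℝ :=
  K1r d s W θ g₁ v Λ + (interW d s v Λ v₀ Λᶜ).toReal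

/-- The axis-parallel open cube with lower-left corner `c` and side length `L`. -/
def cube (d : ℕ) (c : Rd d) (L : ℝ) : Set (Rd d) :=
  {x | ∀ i, x i ∈ Set.Ioo (c i) (c i + L)}

/-- Membership in the fractional Sobolev space `H^s(Λ)`. -/
def memHs (d : ℕ) (s : ℝ) (v : Rd d → ℝ) (Λ : Set (Rd d)) : Prop :=
  MemLp v 2 (volume.restrict Λ) ∧ gag d s v Λ < ⊤

/-- Membership in `H^s_loc(ℝ^d)`: membership in `H^s(B)` for every ball `B`. -/
def memHsLoc (d : ℕ) (s : ℝ) (v : Rd d → ℝ) : Prop :=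
  ∀ (x : Rd d) (R : ℝ), memHs d s v (Metric.ball x R)

/-- Assumption (H1) on the double well potential `W`. -/
def H1 (W : ℝ → ℝ) (C₀ δ₀ : ℝ) : Prop :=
  ContDiff ℝ 2 W ∧ (∀ t, 0 ≤ W t) ∧ (∀ t, W t = 0 ↔ t = -1 ∨ t = 1) ∧
  (∀ t, W (-t) = W t) ∧ StrictAntiOn W (Set.Icc 0 1) ∧
  0 < δ₀ ∧ 0 < C₀ ∧ ∀ t : ℝ, 1 - δ₀ < t → W t = 1 / (2 * C₀) * (t - 1) ^ 2

/-- `v` is `α`-Hölder continuous with constant `H` on the set `A`. -/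
def HolderOn (d : ℕ) (α H : ℝ) (v : Rd d → ℝ) (A : Set (Rd d)) : Prop :=
  ∀ x ∈ A, ∀ y ∈ A, |v x - v y| ≤ H * ‖x - y‖ ^ α

/-- `v ∈ C^{0,α}_loc(ℝ^d)`. -/
def HolderLoc (d : ℕ) (α : ℝ) (v : Rd d → ℝ) : Prop :=
  ∀ K : Set (Rd d), IsCompact K → ∃ H : ℝ, HolderOn d α H v K

/-- `v ∈ C^{1,α}_loc(ℝ^d)`. -/
def C1HolderLoc (d : ℕ) (α : ℝ) (v : Rd d → ℝ) : Prop :=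
  ContDiff ℝ 1 v ∧ ∀ K : Set (Rd d), IsCompact K → ∃ H : ℝ,
    ∀ x ∈ K, ∀ y ∈ K, ‖fderiv ℝ v x - fderiv ℝ v y‖ ≤ H * ‖x - y‖ ^ α

/-- `u` is a `v₀`-minimizer of `G₁` in `Λ` (for the field `g₁`). -/
def IsBCMin (d : ℕ) (s : ℝ) (W : ℝ → ℝ) (θ : ℝ) (g₁ v₀ u : Rd d → ℝ)
    (Λ : Set (Rd d)) : Prop :=
  Measurable u ∧ Set.EqOn u v₀ Λᶜ ∧ G1bce d s W θ g₁ v₀ u Λ ≠ ⊤ ∧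
  ∀ w : Rd d → ℝ, Measurable w → Set.EqOn w v₀ Λᶜ →
    G1bce d s W θ g₁ v₀ u Λ ≤ G1bce d s W θ g₁ v₀ w Λ

/-- `u` is a minimizer of `G₁` under compact perturbations. -/
def IsMinCP (d : ℕ) (s : ℝ) (W : ℝ → ℝ) (θ : ℝ) (g₁ : Rd d → ℝ) (u : Rd d → ℝ) : Prop :=
  Measurable u ∧ memHsLoc d s u ∧ (∃ M : ℝ, ∀ x, |u x| ≤ M) ∧
  ∀ U : Set (Rd d), IsOpen U → Bornology.IsBounded U →
    G1e d s W θ g₁ u U ≠ ⊤ ∧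
    ∀ w : Rd d → ℝ, Measurable w → Set.EqOn w u Uᶜ →
      G1e d s W θ g₁ u U ≤ G1e d s W θ g₁ w U

/-- The lattice point `y ∈ ℤ^d` as a point of `ℝ^d`. -/
def latE (d : ℕ) (y : Fin d → ℤ) : Rd d :=
  (EuclideanSpace.equiv (Fin d) ℝ).symm (fun i => (y i : ℝ))

/-- The random field `g₁(x,ω) = Σ_z ω(z) 1_{z+[-1/2,1/2)^d}(x)`. -/
def fieldOf (d : ℕ) (ω : (Fin d → ℤ) → ℝ) (x : Rd d) : ℝ :=
  ω (fun i => ⌊x i + 1/2⌋)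

/-- The cube `Λ_n = (-n/2, n/2)^d`. -/
def cubeN (d : ℕ) (n : ℕ) : Set (Rd d) :=
  {x | ∀ i, x i ∈ Set.Ioo (-(n / 2) : ℝ) ((n : ℝ) / 2)}

/-- The cube `Q(0) = [-1/2,1/2]^d`. -/
def Q0 (d : ℕ) : Set (Rd d) :=
  {x | ∀ i, x i ∈ Set.Icc (-(1/2) : ℝ) (1/2)}

/-- `‖f‖_{C^{0,α}(D)} ≤ N` : sup norm plus Hölder seminorm bounded by `N`. -/
def holderNormLE (d : ℕ) (α : ℝ) (D : Set (Rd d)) (f : Rd d → ℝ) (N : ℝ) : Prop :=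
  ∃ a b : ℝ, 0 ≤ a ∧ 0 ≤ b ∧ a + b ≤ N ∧ (∀ x ∈ D, |f x| ≤ a) ∧
    ∀ x ∈ D, ∀ y ∈ D, |f x - f y| ≤ b * ‖x - y‖ ^ α


/-! ### Auxiliary lemmas -/

section Aux

lemma enn_coe_toReal (a : ℝ≥0∞) (h : a ≠ ⊤) : ((a.toReal : ℝ) : EReal) = (a : EReal) := by
  rw [← EReal.toReal_coe_ennreal]
  exact EReal.coe_toReal (by simpa using h) (EReal.coe_ennreal_ne_bot a)

lemma trunc_abs_le (t b : ℝ) (ht : 0 ≤ t) : |min t (max b (-t))| ≤ t := by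
  rw [abs_le]
  exact ⟨le_min (by linarith) (le_max_right _ _), min_le_left _ _⟩

lemma trunc_dist_le (t a b : ℝ) (ha : |a| ≤ t) : |min t (max b (-t)) - a| ≤ |b - a| := by
  rw [abs_le] at ha
  have h1 : b - a ≤ |b - a| := le_abs_self _
  have h2 : a - b ≤ |b - a| := by rw [abs_sub_comm]; exact le_abs_self _
  have h0 : 0 ≤ |b - a| := abs_nonneg _
  rw [abs_sub_le_iff]
  simp only [min_def, max_def]
  constructor <;> split_ifs <;> linarith

lemma trunc_lip (t b c : ℝ) : |min t (max b (-t)) - min t (max c (-t))| ≤ |b - c| := by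
  have h1 : b - c ≤ |b - c| := le_abs_self _
  have h2 : c - b ≤ |b - c| := by rw [abs_sub_comm]; exact le_abs_self _
  have h0 : 0 ≤ |b - c| := abs_nonneg _
  rw [abs_sub_le_iff]
  simp only [min_def, max_def]
  constructor <;> split_ifs <;> linarith

lemma trunc_eq (t b : ℝ) (h : |b| ≤ t) : min t (max b (-t)) = b := by
  rw [abs_le] at h
  rw [max_eq_left (by linarith), min_eq_right h.2]

lemma trunc_high (t b : ℝ) (ht : 0 ≤ t) (h : t < b) : min t (max b (-t)) = t := by
  rw [max_eq_left (by linarith), min_eq_left h.le]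

lemma trunc_low (t b : ℝ) (ht : 0 ≤ t) (h : b < -t) : min t (max b (-t)) = -t := by
  rw [max_eq_right h.le, min_eq_right (by linarith)]

lemma sq_le_of_abs_le' {a b : ℝ} (h : |a| ≤ |b|) : a ^ 2 ≤ b ^ 2 := by
  have := mul_self_le_mul_self (abs_nonneg a) h
  simpa [abs_mul_abs_self, sq] using this

lemma sq_div_mono' {a b n : ℝ} (h : a ^ 2 ≤ b ^ 2) (hn : 0 ≤ n) : a ^ 2 / n ≤ b ^ 2 / n := by
  rcases eq_or_lt_of_le hn with h0 | h0
  · simp [← h0]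
  · exact div_le_div_of_nonneg_right h h0.le

lemma gag_trunc_le (d : ℕ) (s t : ℝ) (v : Rd d → ℝ) (Λ : Set (Rd d)) :
    gag d s (fun x => min t (max (v x) (-t))) Λ ≤ gag d s v Λ := by
  refine lintegral_mono fun x => lintegral_mono fun y => ENNReal.ofReal_le_ofReal ?_
  refine sq_div_mono' (sq_le_of_abs_le' ?_) (by positivity)
  exact trunc_lip _ _ _

lemma interW_trunc_le (d : ℕ) (s t : ℝ) (v v₀ : Rd d → ℝ) (Λ Λ₁ : Set (Rd d))
    (hv₀ : ∀ y, |v₀ y| ≤ t) :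
    interW d s (fun x => min t (max (v x) (-t))) Λ v₀ Λ₁ ≤ interW d s v Λ v₀ Λ₁ := by
  refine mul_le_mul_right (lintegral_mono fun x => lintegral_mono fun y =>
    ENNReal.ofReal_le_ofReal ?_) 2
  refine sq_div_mono' (sq_le_of_abs_le' ?_) (by positivity)
  exact trunc_dist_le _ _ _ (hv₀ y)

variable {W : ℝ → ℝ} {C₀ δ₀ : ℝ}

lemma W_abs (hW : H1 W C₀ δ₀) (r : ℝ) : W r = W |r| := by
  rcases le_or_gt 0 r with h | h
  · rw [abs_of_nonneg h]
  · rw [abs_of_neg h, ← hW.2.2.2.1 r]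

lemma W_quad (hW : H1 W C₀ δ₀) {r : ℝ} (hr : 1 ≤ r) : W r = 1 / (2 * C₀) * (r - 1) ^ 2 :=
  hW.2.2.2.2.2.2.2 r (by linarith [hW.2.2.2.2.2.1])

lemma quad_gain (hC : 0 < C₀) {t r : ℝ} (ht : 1 ≤ t) (hr : t ≤ r) :
    1 / (2 * C₀) * (t - 1) ^ 2 + C₀⁻¹ * (t - 1) * (r - t) ≤ 1 / (2 * C₀) * (r - 1) ^ 2 := by
  have key : (t - 1) ^ 2 + 2 * ((t - 1) * (r - t)) ≤ (r - 1) ^ 2 := by nlinarith [sq_nonneg (r - t)]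
  have h2C : (0:ℝ) ≤ 2 * C₀ := by linarith
  have hd := div_le_div_of_nonneg_right key h2C
  have e1 : 1 / (2 * C₀) * (t - 1) ^ 2 + C₀⁻¹ * (t - 1) * (r - t)
      = ((t - 1) ^ 2 + 2 * ((t - 1) * (r - t))) / (2 * C₀) := by
    field_simp
  have e2 : 1 / (2 * C₀) * (r - 1) ^ 2 = (r - 1) ^ 2 / (2 * C₀) := by ring
  rw [e1, e2]; exact hd

lemma W_gain (hW : H1 W C₀ δ₀) {t r : ℝ} (ht : 1 ≤ t) (hr : t < |r|) :
    W (min t (max r (-t))) + C₀⁻¹ * (t - 1) * (|r| - t) ≤ W r := by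
  have hC := hW.2.2.2.2.2.2.1
  have htr : W (min t (max r (-t))) = W t := by
    rcases le_or_gt 0 r with h | h
    · rw [abs_of_nonneg h] at hr; rw [trunc_high t r (by linarith) hr]
    · rw [abs_of_neg h] at hr
      rw [trunc_low t r (by linarith) (by linarith), ← hW.2.2.2.1 t]
  rw [htr, W_abs hW r, W_quad hW ht, W_quad hW (by linarith : (1:ℝ) ≤ |r|)]
  exact quad_gain hC ht hr.le

lemma W_trunc_pt (hW : H1 W C₀ δ₀) {t : ℝ} (ht : 1 ≤ t) (r : ℝ) :
    W (min t (max r (-t))) + (if t < |r| then C₀⁻¹ * (t - 1) * (|r| - t) else 0) ≤ W r := by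
  by_cases h : t < |r|
  · rw [if_pos h]; exact W_gain hW ht h
  · rw [if_neg h, trunc_eq t r (not_lt.1 h), add_zero]

lemma trunc_diff_abs {t : ℝ} (ht : 0 ≤ t) (r : ℝ) :
    |r - min t (max r (-t))| = if t < |r| then |r| - t else 0 := by
  by_cases h : t < |r|
  · rw [if_pos h]
    rcases le_or_gt 0 r with h0 | h0
    · rw [abs_of_nonneg h0] at h ⊢
      rw [trunc_high t r ht h, abs_of_nonneg (by linarith)]
    · rw [abs_of_neg h0] at h ⊢
      rw [trunc_low t r ht (by linarith), abs_of_nonpos (by linarith)]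
      ring
  · rw [if_neg h, trunc_eq t r (not_lt.1 h), sub_self, abs_zero]

lemma W_growth (hW : H1 W C₀ δ₀) : ∃ B : ℝ, 0 ≤ B ∧ ∀ r, W r ≤ B + (r ^ 2 + 1) / C₀ := by
  have hC := hW.2.2.2.2.2.2.1
  obtain ⟨B, hB⟩ := isCompact_Icc.exists_bound_of_continuousOn
    (f := W) (hW.1.continuous.continuousOn (s := Set.Icc (-1 : ℝ) 1))
  refine ⟨B, le_trans (norm_nonneg (W 1)) (hB 1 ⟨by norm_num, le_rfl⟩), fun r => ?_⟩
  by_cases h : |r| ≤ 1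
  · have := hB r (abs_le.1 h)
    have h2 : W r ≤ B := le_trans (le_abs_self _) this
    have : 0 ≤ (r ^ 2 + 1) / C₀ := by positivity
    linarith
  · push_neg at h
    rw [W_abs hW r, W_quad hW h.le]
    have h1 : (|r| - 1) ^ 2 ≤ r ^ 2 + 1 := by nlinarith [abs_nonneg r, sq_abs r]
    have h2 : 1 / (2 * C₀) * (|r| - 1) ^ 2 ≤ (r ^ 2 + 1) / (2 * C₀) := by
      rw [one_div_mul_eq_div]
      exact div_le_div_of_nonneg_right h1 (by linarith)
    have h3 : (r ^ 2 + 1) / (2 * C₀) ≤ (r ^ 2 + 1) / C₀ :=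
      div_le_div_of_nonneg_left (by positivity) hC (by linarith)
    have hBB : 0 ≤ B := le_trans (norm_nonneg (W 1)) (hB 1 ⟨by norm_num, le_rfl⟩)
    linarith

lemma K1e_ne_bot (d : ℕ) (s : ℝ) (W : ℝ → ℝ) (θ : ℝ) (g₁ : Rd d → ℝ) (v : Rd d → ℝ)
    (Λ : Set (Rd d)) : K1e d s W θ g₁ v Λ ≠ ⊥ := by
  unfold K1e
  by_cases h : gag d s v Λ = ⊤
  · rw [h, EReal.coe_ennreal_top, EReal.top_add_of_ne_bot (EReal.coe_ne_bot _),
      EReal.top_sub_coe]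
    exact top_ne_bot
  · rw [← enn_coe_toReal _ h, ← EReal.coe_add, ← EReal.coe_sub]
    exact EReal.coe_ne_bot _

lemma G1bce_top_left {d : ℕ} {s : ℝ} {W : ℝ → ℝ} {θ : ℝ} {g₁ : Rd d → ℝ} {v₀ v : Rd d → ℝ}
    {Λ : Set (Rd d)} (h : gag d s v Λ = ⊤) : G1bce d s W θ g₁ v₀ v Λ = ⊤ := by
  unfold G1bce K1e
  rw [h, EReal.coe_ennreal_top, EReal.top_add_of_ne_bot (EReal.coe_ne_bot _),
    EReal.top_sub_coe, EReal.top_add_of_ne_bot (EReal.coe_ennreal_ne_bot _)]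

lemma G1bce_top_right {d : ℕ} {s : ℝ} {W : ℝ → ℝ} {θ : ℝ} {g₁ : Rd d → ℝ} {v₀ v : Rd d → ℝ}
    {Λ : Set (Rd d)} (h : interW d s v Λ v₀ Λᶜ = ⊤) : G1bce d s W θ g₁ v₀ v Λ = ⊤ := by
  unfold G1bce
  rw [h, EReal.coe_ennreal_top, EReal.add_top_of_ne_bot (K1e_ne_bot _ _ _ _ _ _ _)]

lemma G1bce_repr {d : ℕ} {s : ℝ} {W : ℝ → ℝ} {θ : ℝ} {g₁ : Rd d → ℝ} {v₀ v : Rd d → ℝ}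
    {Λ : Set (Rd d)} (hg : gag d s v Λ ≠ ⊤) (hi : interW d s v Λ v₀ Λᶜ ≠ ⊤) :
    G1bce d s W θ g₁ v₀ v Λ = ((G1bcr d s W θ g₁ v₀ v Λ : ℝ) : EReal) := by
  unfold G1bce K1e G1bcr K1r
  rw [← enn_coe_toReal _ hg, ← enn_coe_toReal _ hi, ← EReal.coe_add, ← EReal.coe_sub,
    ← EReal.coe_add]

end Aux
lemma main_ineq {d : ℕ} {s : ℝ} {W : ℝ → ℝ} {C₀ δ₀ : ℝ} (hW : H1 W C₀ δ₀)
    {θ : ℝ} (hθ : 0 ≤ θ) {g₁ : Rd d → ℝ} (hg : Measurable g₁) {Mg : ℝ}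
    (hgb : ∀ x, |g₁ x| ≤ Mg)
    {Λ : Set (Rd d)} (hΛm : MeasurableSet Λ) (hΛf : volume Λ < ⊤)
    {v₀ : Rd d → ℝ} {Mv₀ : ℝ} (hv₀b : ∀ x, |v₀ x| ≤ Mv₀)
    {t : ℝ} (ht1 : 1 ≤ t) (htM : Mv₀ ≤ t)
    {v : Rd d → ℝ} (hv : Measurable v)
    (hvi : IntegrableOn v Λ) (hWv : IntegrableOn (fun x => W (v x)) Λ) :
    G1bce d s W θ g₁ v₀ (fun x => min t (max (v x) (-t))) Λ +
        (((∫ y in {y ∈ Λ | t < |v y|}, (C₀⁻¹ * (t - 1) - θ * Mg) * (|v y| - t)) : ℝ) : EReal) ≤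
      G1bce d s W θ g₁ v₀ v Λ := by
  have hC := hW.2.2.2.2.2.2.1
  have ht0 : (0:ℝ) ≤ t := by linarith
  have hv₀t : ∀ y, |v₀ y| ≤ t := fun y => le_trans (hv₀b y) htM
  by_cases hgt : gag d s v Λ = ⊤
  · rw [G1bce_top_left hgt]; exact le_top
  by_cases hit : interW d s v Λ v₀ Λᶜ = ⊤
  · rw [G1bce_top_right hit]; exact le_top
  set T : Rd d → ℝ := fun x => min t (max (v x) (-t)) with hT_def
  have hT : Measurable T := measurable_const.min (hv.max measurable_const)
  have hgT : gag d s T Λ ≠ ⊤ :=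
    ((gag_trunc_le d s t v Λ).trans_lt (lt_top_iff_ne_top.2 hgt)).ne
  have hiT : interW d s T Λ v₀ Λᶜ ≠ ⊤ :=
    ((interW_trunc_le d s t v v₀ Λ Λᶜ hv₀t).trans_lt (lt_top_iff_ne_top.2 hit)).ne
  rw [G1bce_repr hgT hiT, G1bce_repr hgt hit, ← EReal.coe_add, EReal.coe_le_coe_iff]
  -- now a real inequality
  haveI : IsFiniteMeasure (volume.restrict Λ) :=
    ⟨by rwa [Measure.restrict_apply_univ]⟩
  set S : Set (Rd d) := {y | t < |v y|} with hS_def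
  have hS : MeasurableSet S := measurableSet_lt measurable_const hv.abs
  have hsep : {y ∈ Λ | t < |v y|} = S ∩ Λ := by
    ext y; exact ⟨fun h => ⟨h.2, h.1⟩, fun h => ⟨h.2, h.1⟩⟩
  have hrr : (volume.restrict Λ).restrict S = volume.restrict {y ∈ Λ | t < |v y|} := by
    rw [Measure.restrict_restrict hS, hsep]
  -- integrability facts
  have hWT : IntegrableOn (fun x => W (T x)) Λ := by
    obtain ⟨B, hB⟩ := isCompact_Icc.exists_bound_of_continuousOn
      (f := W) (hW.1.continuous.continuousOn (s := Set.Icc (-t) t))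
    refine (integrable_const B).mono' ((hW.1.continuous.measurable.comp hT).aestronglyMeasurable) ?_
    refine Filter.Eventually.of_forall fun x => hB (T x) (abs_le.1 (trunc_abs_le t (v x) ht0))
  have hgv : IntegrableOn (fun x => g₁ x * v x) Λ := by
    refine (hvi.abs.const_mul Mg).mono' ((hg.mul hv).aestronglyMeasurable) ?_
    refine Filter.Eventually.of_forall fun x => ?_
    rw [Real.norm_eq_abs, abs_mul]
    exact mul_le_mul_of_nonneg_right (hgb x) (abs_nonneg _)
  have hgT2 : IntegrableOn (fun x => g₁ x * T x) Λ := by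
    refine (integrable_const (Mg * t)).mono' ((hg.mul hT).aestronglyMeasurable) ?_
    refine Filter.Eventually.of_forall fun x => ?_
    rw [Real.norm_eq_abs, abs_mul]
    exact mul_le_mul (hgb x) (trunc_abs_le t (v x) ht0) (abs_nonneg _)
      (le_trans (abs_nonneg _) (hgb x))
  have hf0 : IntegrableOn (fun y => |v y| - t) {y ∈ Λ | t < |v y|} := by
    refine IntegrableOn.mono_set ?_ (fun y hy => hy.1)
    exact hvi.abs.sub (integrableOn_const hΛf.ne)
  -- indicator functions
  have hindWint : Integrable (S.indicator fun y => C₀⁻¹ * (t - 1) * (|v y| - t))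
      (volume.restrict Λ) := by
    rw [integrable_indicator_iff hS]
    unfold IntegrableOn
    rw [hrr]
    exact hf0.const_mul _
  have hindMint : Integrable (S.indicator fun y => Mg * (|v y| - t)) (volume.restrict Λ) := by
    rw [integrable_indicator_iff hS]
    unfold IntegrableOn
    rw [hrr]
    exact hf0.const_mul _
  -- (c): potential term
  have hc : (∫ x in Λ, W (T x)) + C₀⁻¹ * (t - 1) * (∫ y in {y ∈ Λ | t < |v y|}, (|v y| - t))
      ≤ ∫ x in Λ, W (v x) := by
    have hind : ∫ x in Λ, S.indicator (fun y => C₀⁻¹ * (t - 1) * (|v y| - t)) x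
        = C₀⁻¹ * (t - 1) * ∫ y in {y ∈ Λ | t < |v y|}, (|v y| - t) := by
      rw [integral_indicator hS, hrr, integral_const_mul]
    have hmono : ∫ x in Λ, S.indicator (fun y => C₀⁻¹ * (t - 1) * (|v y| - t)) x
        ≤ ∫ x in Λ, (W (v x) - W (T x)) := by
      refine integral_mono hindWint (hWv.sub hWT) fun x => ?_
      have := W_trunc_pt hW ht1 (v x)
      rw [Set.indicator_apply]
      by_cases h : x ∈ S
      · rw [if_pos h, hS_def] at *
        simp only [Set.mem_setOf_eq] at h
        rw [if_pos h] at this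
        linarith
      · rw [if_neg h, hS_def] at *
        simp only [Set.mem_setOf_eq] at h
        rw [if_neg h] at this
        linarith
    rw [hind] at hmono
    rw [integral_sub hWv hWT] at hmono
    linarith
  -- (d): field term
  have hdd : θ * (∫ x in Λ, g₁ x * v x) - θ * (∫ x in Λ, g₁ x * T x)
      ≤ θ * (Mg * ∫ y in {y ∈ Λ | t < |v y|}, (|v y| - t)) := by
    have hind : ∫ x in Λ, S.indicator (fun y => Mg * (|v y| - t)) x
        = Mg * ∫ y in {y ∈ Λ | t < |v y|}, (|v y| - t) := by
      rw [integral_indicator hS, hrr, integral_const_mul]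
    have hmono : ∫ x in Λ, (g₁ x * v x - g₁ x * T x)
        ≤ ∫ x in Λ, S.indicator (fun y => Mg * (|v y| - t)) x := by
      refine integral_mono (hgv.sub hgT2) hindMint fun x => ?_
      have hpt : g₁ x * v x - g₁ x * T x ≤ |g₁ x| * |v x - T x| := by
        rw [← mul_sub, ← abs_mul]
        exact le_abs_self _
      have habs : |v x - T x| = if t < |v x| then |v x| - t else 0 := trunc_diff_abs ht0 (v x)
      rw [Set.indicator_apply]
      by_cases h : x ∈ S
      · rw [if_pos h]
        rw [hS_def] at h
        simp only [Set.mem_setOf_eq] at h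
        rw [if_pos h] at habs
        refine hpt.trans ?_
        rw [habs]
        exact mul_le_mul_of_nonneg_right (hgb x) (by linarith)
      · rw [if_neg h]
        rw [hS_def] at h
        simp only [Set.mem_setOf_eq] at h
        rw [if_neg h] at habs
        refine hpt.trans ?_
        rw [habs, mul_zero]
      -- done
    rw [hind] at hmono
    rw [integral_sub hgv hgT2] at hmono
    have := mul_le_mul_of_nonneg_left hmono hθ
    rw [mul_sub] at this
    linarith
  -- (a),(b)
  have ha : (gag d s T Λ).toReal ≤ (gag d s v Λ).toReal :=
    ENNReal.toReal_mono hgt (gag_trunc_le d s t v Λ)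
  have hb : (interW d s T Λ v₀ Λᶜ).toReal ≤ (interW d s v Λ v₀ Λᶜ).toReal :=
    ENNReal.toReal_mono hit (interW_trunc_le d s t v v₀ Λ Λᶜ hv₀t)
  -- assemble
  unfold G1bcr K1r
  have hI : ∫ y in {y ∈ Λ | t < |v y|}, (C₀⁻¹ * (t - 1) - θ * Mg) * (|v y| - t)
      = (C₀⁻¹ * (t - 1) - θ * Mg) * ∫ y in {y ∈ Λ | t < |v y|}, (|v y| - t) := by
    rw [integral_const_mul]
  rw [hI]
  set J := ∫ y in {y ∈ Λ | t < |v y|}, (|v y| - t)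
  have hexp : (C₀⁻¹ * (t - 1) - θ * Mg) * J = C₀⁻¹ * (t - 1) * J - θ * (Mg * J) := by ring
  rw [hexp]
  linarith
lemma G1bce_ne_bot (d : ℕ) (s : ℝ) (W : ℝ → ℝ) (θ : ℝ) (g₁ : Rd d → ℝ) (v₀ v : Rd d → ℝ)
    (Λ : Set (Rd d)) : G1bce d s W θ g₁ v₀ v Λ ≠ ⊥ := by
  by_cases h1 : gag d s v Λ = ⊤
  · rw [G1bce_top_left h1]; exact top_ne_bot
  by_cases h2 : interW d s v Λ v₀ Λᶜ = ⊤
  · rw [G1bce_top_right h2]; exact top_ne_bot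
  rw [G1bce_repr h1 h2]; exact EReal.coe_ne_bot _

lemma integrable_of_interW {d : ℕ} (hd : 1 ≤ d) {s : ℝ} (hs0 : 0 < s)
    {Λ : Set (Rd d)} (hΛm : MeasurableSet Λ) (hΛb : Bornology.IsBounded Λ)
    {v₀ : Rd d → ℝ} {Mv₀ : ℝ} (hMv₀ : 0 ≤ Mv₀) (hv₀b : ∀ x, |v₀ x| ≤ Mv₀)
    {u : Rd d → ℝ} (hu : Measurable u)
    (hfin : interW d s u Λ v₀ Λᶜ ≠ ⊤) :
    IntegrableOn u Λ ∧ IntegrableOn (fun x => (u x) ^ 2) Λ := by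
  have hΛf : volume Λ < ⊤ := hΛb.measure_lt_top
  obtain ⟨R, hR, hΛR⟩ := hΛb.subset_ball_lt 0 0
  set p : ℝ := (d : ℝ) + 2 * s with hp
  have hp0 : 0 < p := by positivity
  set c : Rd d := EuclideanSpace.single (⟨0, hd⟩ : Fin d) ((5/2) * R) with hc
  have hcn : ‖c‖ = 5/2 * R := by
    rw [hc, EuclideanSpace.norm_single, Real.norm_eq_abs, abs_of_pos (by linarith)]
  set Sb := Metric.ball c (R/2) with hSb
  have hSsub : Sb ⊆ Λᶜ := by
    intro y hy
    rw [hSb, Metric.mem_ball, dist_eq_norm] at hy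
    intro hyΛ
    have h1 : ‖y‖ < R := mem_ball_zero_iff.1 (hΛR hyΛ)
    have h2 : ‖c‖ ≤ ‖c - y‖ + ‖y‖ := by
      calc ‖c‖ = ‖(c - y) + y‖ := by rw [sub_add_cancel]
      _ ≤ ‖c - y‖ + ‖y‖ := norm_add_le _ _
    rw [norm_sub_rev] at h2
    rw [hcn] at h2
    linarith
  have hbound : ∀ x ∈ Λ, ∀ y ∈ Sb, R ≤ ‖x - y‖ ∧ ‖x - y‖ ≤ 4 * R := by
    intro x hx y hy
    rw [hSb, Metric.mem_ball, dist_eq_norm] at hy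
    have hxn : ‖x‖ < R := mem_ball_zero_iff.1 (hΛR hx)
    have hyn1 : ‖y‖ ≤ 3 * R := by
      calc ‖y‖ = ‖(y - c) + c‖ := by rw [sub_add_cancel]
      _ ≤ ‖y - c‖ + ‖c‖ := norm_add_le _ _
      _ ≤ R/2 + 5/2 * R := by rw [hcn]; linarith
      _ = 3 * R := by ring
    have hyn2 : 2 * R ≤ ‖y‖ := by
      have h2 : ‖c‖ ≤ ‖c - y‖ + ‖y‖ := by
        calc ‖c‖ = ‖(c - y) + y‖ := by rw [sub_add_cancel]
        _ ≤ ‖c - y‖ + ‖y‖ := norm_add_le _ _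
      rw [norm_sub_rev, hcn] at h2
      linarith
    constructor
    · have h3 : ‖y‖ ≤ ‖y - x‖ + ‖x‖ := by
        calc ‖y‖ = ‖(y - x) + x‖ := by rw [sub_add_cancel]
        _ ≤ ‖y - x‖ + ‖x‖ := norm_add_le _ _
      rw [norm_sub_rev] at h3
      linarith
    · calc ‖x - y‖ ≤ ‖x‖ + ‖y‖ := norm_sub_le _ _
      _ ≤ 4 * R := by linarith
  set q : Rd d → ℝ := fun x => (u x) ^ 2 / 2 - Mv₀ ^ 2 with hq
  set K : ℝ := (4 * R) ^ p with hK
  have hK0 : 0 < K := Real.rpow_pos_of_pos (by linarith) p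
  have hqm : Measurable fun x => q x / K :=
    (((hu.pow_const 2).div_const 2).sub measurable_const).div_const K
  -- step 1 : pointwise lower bound chain
  have step1 : ∫⁻ x in Λ, ENNReal.ofReal (q x / K) * volume Sb
      ≤ ∫⁻ x in Λ, ∫⁻ y in Λᶜ, ENNReal.ofReal ((u x - v₀ y) ^ 2 / ‖x - y‖ ^ p) := by
    refine setLIntegral_mono' hΛm fun x hx => ?_
    have hinner : ENNReal.ofReal (q x / K) * volume Sb
        = ∫⁻ y in Sb, ENNReal.ofReal (q x / K) := (setLIntegral_const _ _).symm
    rw [hinner]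
    refine le_trans (setLIntegral_mono' measurableSet_ball fun y hy => ?_)
      (lintegral_mono' (Measure.restrict_mono hSsub le_rfl) le_rfl)
    apply ENNReal.ofReal_le_ofReal
    obtain ⟨hlo, hhi⟩ := hbound x hx y hy
    have hnpos : 0 < ‖x - y‖ := lt_of_lt_of_le hR hlo
    have hnum : q x ≤ (u x - v₀ y) ^ 2 := by
      have hv2 : (v₀ y) ^ 2 ≤ Mv₀ ^ 2 := by
        have := hv₀b y
        nlinarith [abs_nonneg (v₀ y), sq_abs (v₀ y)]
      have hqx : q x = (u x) ^ 2 / 2 - Mv₀ ^ 2 := rfl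
      rw [hqx]
      nlinarith [sq_nonneg (u x - 2 * v₀ y), hv2]
    have hd1 : q x / K ≤ (u x - v₀ y) ^ 2 / K := div_le_div_of_nonneg_right hnum hK0.le
    have hd2 : (u x - v₀ y) ^ 2 / K ≤ (u x - v₀ y) ^ 2 / ‖x - y‖ ^ p := by
      refine div_le_div_of_nonneg_left (sq_nonneg _) (Real.rpow_pos_of_pos hnpos p) ?_
      rw [hK]
      exact Real.rpow_le_rpow (norm_nonneg _) hhi hp0.le
    exact hd1.trans hd2
  have hIfin : ∫⁻ x in Λ, ∫⁻ y in Λᶜ, ENNReal.ofReal ((u x - v₀ y) ^ 2 / ‖x - y‖ ^ p) ≠ ⊤ := by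
    intro h
    apply hfin
    unfold interW
    rw [← hp, h, ENNReal.mul_top (by norm_num : (2:ℝ≥0∞) ≠ 0)]
  have hSb0 : volume Sb ≠ 0 := (Metric.measure_ball_pos volume c (by linarith : (0:ℝ) < R/2)).ne'
  have step2 : ∫⁻ x in Λ, ENNReal.ofReal (q x / K) * volume Sb
      = (∫⁻ x in Λ, ENNReal.ofReal (q x / K)) * volume Sb :=
    lintegral_mul_const _ hqm.ennreal_ofReal
  have hqfin : ∫⁻ x in Λ, ENNReal.ofReal (q x / K) ≠ ⊤ := by
    intro h
    rw [step2, h, ENNReal.top_mul hSb0] at step1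
    exact hIfin (top_le_iff.1 step1)
  -- square integrability
  have hptw : ∀ x, ENNReal.ofReal ((u x) ^ 2)
      ≤ ENNReal.ofReal (2 * K) * ENNReal.ofReal (q x / K) + ENNReal.ofReal (2 * Mv₀ ^ 2) := by
    intro x
    have hsplit : (u x) ^ 2 = 2 * K * (q x / K) + 2 * Mv₀ ^ 2 := by
      have hKne : K ≠ 0 := hK0.ne'
      rw [hq]
      field_simp
      ring
    rw [hsplit]
    refine le_trans (ENNReal.ofReal_add_le) ?_
    rw [ENNReal.ofReal_mul (by linarith : (0:ℝ) ≤ 2 * K)]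
  have hsqfin : ∫⁻ x in Λ, ENNReal.ofReal ((u x) ^ 2) < ⊤ := by
    calc ∫⁻ x in Λ, ENNReal.ofReal ((u x) ^ 2)
        ≤ ∫⁻ x in Λ, (ENNReal.ofReal (2 * K) * ENNReal.ofReal (q x / K)
            + ENNReal.ofReal (2 * Mv₀ ^ 2)) := lintegral_mono hptw
      _ = ENNReal.ofReal (2 * K) * (∫⁻ x in Λ, ENNReal.ofReal (q x / K))
            + ENNReal.ofReal (2 * Mv₀ ^ 2) * volume Λ := by
          rw [lintegral_add_right _ measurable_const, lintegral_const_mul _ hqm.ennreal_ofReal,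
            setLIntegral_const]
      _ < ⊤ := by
          apply ENNReal.add_lt_top.2
          constructor
          · exact ENNReal.mul_lt_top ENNReal.ofReal_lt_top (lt_top_iff_ne_top.2 hqfin)
          · exact ENNReal.mul_lt_top ENNReal.ofReal_lt_top hΛf
  have husq : IntegrableOn (fun x => (u x) ^ 2) Λ := by
    refine ⟨(hu.pow_const 2).aestronglyMeasurable, ?_⟩
    show (∫⁻ x in Λ, (‖(u x) ^ 2‖₊ : ℝ≥0∞)) < ⊤
    have heq : ∀ x, ((‖(u x) ^ 2‖₊ : ℝ≥0∞)) = ENNReal.ofReal ((u x) ^ 2) := fun x => by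
      change ‖(u x) ^ 2‖ₑ = _
      rw [← ofReal_norm, Real.norm_eq_abs, abs_of_nonneg (sq_nonneg _)]
    calc ∫⁻ x in Λ, (‖(u x) ^ 2‖₊ : ℝ≥0∞) = ∫⁻ x in Λ, ENNReal.ofReal ((u x) ^ 2) :=
          lintegral_congr fun x => heq x
      _ < ⊤ := hsqfin
  refine ⟨?_, husq⟩
  have hone : IntegrableOn (fun _ : Rd d => (1:ℝ)) Λ := integrableOn_const hΛf.ne
  have hgint : IntegrableOn (fun x => ((u x) ^ 2 + 1) / 2) Λ := (husq.add hone).div_const 2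
  refine hgint.mono' hu.aestronglyMeasurable ?_
  refine Filter.Eventually.of_forall fun x => ?_
  rw [Real.norm_eq_abs]
  nlinarith [sq_nonneg (|u x| - 1), sq_abs (u x)]
/-- energy decrease under truncation for `G₁^{v₀}`, and the resulting
uniform bound on `v₀`-minimizers. -/
theorem statement2 (d : ℕ) (hd : 1 ≤ d) (s : ℝ) (hs : 0 < s ∧ s < 1)
    (W : ℝ → ℝ) (C₀ δ₀ : ℝ) (hW : H1 W C₀ δ₀)
    (θ : ℝ) (hθ : 0 ≤ θ)
    (g₁ : Rd d → ℝ) (hg : Measurable g₁) (Mg : ℝ) (hMg : 0 ≤ Mg)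
    (hgb : ∀ x, |g₁ x| ≤ Mg)
    (Λ : Set (Rd d)) (hΛo : IsOpen Λ) (hΛb : Bornology.IsBounded Λ)
    (v₀ : Rd d → ℝ) (hv₀ : Measurable v₀) (Mv₀ : ℝ) (hMv₀ : 0 ≤ Mv₀)
    (hv₀b : ∀ x, |v₀ x| ≤ Mv₀)
    (t : ℝ) (ht : max Mv₀ (1 + C₀ * θ * Mg) ≤ t) :
    (∀ v : Rd d → ℝ, Measurable v → memHsLoc d s v → (∃ M, ∀ x, |v x| ≤ M) →
      Set.EqOn v v₀ Λᶜ →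
      G1bce d s W θ g₁ v₀ (fun x => min t (max (v x) (-t))) Λ +
          (((∫ y in {y ∈ Λ | t < |v y|}, (C₀⁻¹ * (t - 1) - θ * Mg) * (|v y| - t)) : ℝ) : EReal) ≤
        G1bce d s W θ g₁ v₀ v Λ) ∧
    ∀ u : Rd d → ℝ, IsBCMin d s W θ g₁ v₀ u Λ →
      ∀ᵐ x ∂(volume : Measure (Rd d)), |u x| ≤ max Mv₀ (1 + C₀ * θ * Mg) := by
  have hC := hW.2.2.2.2.2.2.1
  have hΛf : volume Λ < ⊤ := hΛb.measure_lt_top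
  have hΛm : MeasurableSet Λ := hΛo.measurableSet
  have hcθ : (0:ℝ) ≤ C₀ * θ * Mg := by positivity
  have ht1 : (1:ℝ) ≤ t := le_trans (by linarith [le_max_right Mv₀ (1 + C₀ * θ * Mg)]) ht
  have htM : Mv₀ ≤ t := le_trans (le_max_left _ _) ht
  haveI : IsFiniteMeasure (volume.restrict Λ) := ⟨by rwa [Measure.restrict_apply_univ]⟩
  obtain ⟨B, hB0, hBgr⟩ := W_growth hW
  constructor
  · intro v hv _ hbd _
    obtain ⟨M, hM⟩ := hbd
    have hM0 : 0 ≤ M := le_trans (abs_nonneg _) (hM 0)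
    have hvi : IntegrableOn v Λ := by
      refine (integrable_const M).mono' hv.aestronglyMeasurable ?_
      exact Filter.Eventually.of_forall fun x => by rw [Real.norm_eq_abs]; exact hM x
    have hWv : IntegrableOn (fun x => W (v x)) Λ := by
      refine (integrable_const (B + (M ^ 2 + 1) / C₀)).mono'
        ((hW.1.continuous.measurable.comp hv).aestronglyMeasurable) ?_
      refine Filter.Eventually.of_forall fun x => ?_
      rw [Real.norm_eq_abs, abs_of_nonneg (hW.2.1 _)]
      have h1 : (v x) ^ 2 ≤ M ^ 2 := sq_le_of_abs_le' (by rw [abs_of_nonneg hM0]; exact hM x)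
      have h2 : ((v x) ^ 2 + 1) / C₀ ≤ (M ^ 2 + 1) / C₀ :=
        div_le_div_of_nonneg_right (by linarith) hC.le
      linarith [hBgr (v x)]
    exact main_ineq hW hθ hg hgb hΛm hΛf hv₀b ht1 htM hv hvi hWv
  · intro u hu
    obtain ⟨hum, huEq, hufin, humin⟩ := hu
    set t₀ := max Mv₀ (1 + C₀ * θ * Mg) with ht₀
    have ht₀1 : (1:ℝ) ≤ t₀ := le_trans (by linarith) (le_max_right _ _)
    have ht₀M : Mv₀ ≤ t₀ := le_max_left _ _
    have hit : interW d s u Λ v₀ Λᶜ ≠ ⊤ := fun h => hufin (G1bce_top_right h)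
    obtain ⟨hui, husq⟩ := integrable_of_interW hd hs.1 hΛm hΛb hMv₀ hv₀b hum hit
    have hWu : IntegrableOn (fun x => W (u x)) Λ := by
      have hone : IntegrableOn (fun _ : Rd d => (1:ℝ)) Λ := integrableOn_const hΛf.ne
      have hBint : IntegrableOn (fun _ : Rd d => B) Λ := integrableOn_const hΛf.ne
      have hgint : IntegrableOn (fun x => B + ((u x) ^ 2 + 1) / C₀) Λ :=
        hBint.add ((husq.add hone).div_const C₀)
      refine hgint.mono' ((hW.1.continuous.measurable.comp hum).aestronglyMeasurable) ?_
      refine Filter.Eventually.of_forall fun x => ?_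
      rw [Real.norm_eq_abs, abs_of_nonneg (hW.2.1 _)]
      exact hBgr (u x)
    have key : ∀ n : ℕ, volume {y ∈ Λ | t₀ + 1 / ((n:ℝ) + 1) < |u y|} = 0 := by
      intro n
      set t' : ℝ := t₀ + 1 / ((n:ℝ) + 1) with ht'
      have hn1 : (0:ℝ) < 1 / ((n:ℝ) + 1) := by positivity
      have ht'1 : (1:ℝ) ≤ t' := by rw [ht']; linarith
      have ht'M : Mv₀ ≤ t' := by rw [ht']; linarith
      have hTm : Measurable fun x => min t' (max (u x) (-t')) :=
        measurable_const.min (hum.max measurable_const)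
      have hTEq : Set.EqOn (fun x => min t' (max (u x) (-t'))) v₀ Λᶜ := by
        intro x hx
        show min t' (max (u x) (-t')) = v₀ x
        rw [huEq hx]
        exact trunc_eq _ _ (le_trans (hv₀b x) ht'M)
      have h2 := humin _ hTm hTEq
      have h1 := main_ineq (s := s) hW hθ hg hgb hΛm hΛf hv₀b ht'1 ht'M hum hui hWu
      have hTne : G1bce d s W θ g₁ v₀ (fun x => min t' (max (u x) (-t'))) Λ ≠ ⊤ := by
        intro h
        rw [h, EReal.top_add_of_ne_bot (EReal.coe_ne_bot _)] at h1
        exact hufin (top_le_iff.1 h1)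
      have hrepr := EReal.coe_toReal hTne (G1bce_ne_bot d s W θ g₁ v₀ _ Λ)
      rw [← hrepr] at h1 h2
      have hchain := le_trans h1 h2
      rw [← EReal.coe_add, EReal.coe_le_coe_iff] at hchain
      have hIle : (∫ y in {y ∈ Λ | t' < |u y|},
          (C₀⁻¹ * (t' - 1) - θ * Mg) * (|u y| - t')) ≤ 0 := by linarith
      have hc' : 0 < C₀⁻¹ * (t' - 1) - θ * Mg := by
        have h5 : C₀ * θ * Mg ≤ t₀ - 1 := by
          have := le_max_right Mv₀ (1 + C₀ * θ * Mg); linarith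
        have h6 : θ * Mg ≤ C₀⁻¹ * (t₀ - 1) := by
          have h7 := mul_le_mul_of_nonneg_left h5 (inv_nonneg.2 hC.le)
          rw [show C₀ * θ * Mg = C₀ * (θ * Mg) by ring, ← mul_assoc,
            inv_mul_cancel₀ hC.ne', one_mul] at h7
          exact h7
        have h8 : C₀⁻¹ * (t' - 1) = C₀⁻¹ * (t₀ - 1) + C₀⁻¹ * (1 / ((n:ℝ) + 1)) := by
          rw [ht']; ring
        have h9 : 0 < C₀⁻¹ * (1 / ((n:ℝ) + 1)) := by positivity
        linarith
      set Λt := {y ∈ Λ | t' < |u y|} with hΛt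
      have hΛtm : MeasurableSet Λt := by
        have he : Λt = Λ ∩ {y | t' < |u y|} := by
          ext y; exact ⟨fun h => ⟨h.1, h.2⟩, fun h => ⟨h.1, h.2⟩⟩
        rw [he]
        exact hΛm.inter (measurableSet_lt measurable_const hum.abs)
      have hf0 : IntegrableOn (fun y => |u y| - t') Λt := by
        refine IntegrableOn.mono_set ?_ (fun y hy => hy.1)
        exact hui.abs.sub (integrableOn_const hΛf.ne)
      have hJnn : 0 ≤ ∫ y in Λt, (|u y| - t') :=
        setIntegral_nonneg hΛtm fun y hy => by linarith [hy.2]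
      have hIeq : (∫ y in Λt, (C₀⁻¹ * (t' - 1) - θ * Mg) * (|u y| - t'))
          = (C₀⁻¹ * (t' - 1) - θ * Mg) * ∫ y in Λt, (|u y| - t') := integral_const_mul _ _
      rw [hIeq] at hIle
      have hJle : (∫ y in Λt, (|u y| - t')) ≤ 0 := by
        by_contra hcon
        push_neg at hcon
        nlinarith
      have hJ : (∫ y in Λt, (|u y| - t')) = 0 := le_antisymm hJle hJnn
      have hae0 : (0 : Rd d → ℝ) ≤ᶠ[ae (volume.restrict Λt)] fun y => |u y| - t' := by
        refine (ae_restrict_iff' hΛtm).2 (Filter.Eventually.of_forall fun y hy => ?_)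
        simp only [Pi.zero_apply]
        linarith [hy.2]
      have hae := (integral_eq_zero_iff_of_nonneg_ae hae0 hf0).1 hJ
      have h9 : ∀ᵐ x ∂(volume.restrict Λt), |u x| - t' = 0 := by
        filter_upwards [hae] with x hx using by simpa using hx
      rw [ae_iff, Measure.restrict_apply' hΛtm] at h9
      refine measure_mono_null (fun y hy => ?_) h9
      exact ⟨by simp only [mem_setOf_eq]; intro h0; linarith [hy.2], hy⟩
    rw [ae_iff]
    refine measure_mono_null ?_
      (measure_iUnion_null fun n : ℕ => key n)
    intro x hx
    simp only [mem_setOf_eq, not_le] at hx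
    by_cases hxΛ : x ∈ Λ
    · obtain ⟨n, hn⟩ := exists_nat_one_div_lt (sub_pos.2 hx)
      exact mem_iUnion.2 ⟨n, ⟨hxΛ, by linarith⟩⟩
    · have := hv₀b x
      rw [← huEq hxΛ] at this
      exact absurd (le_trans this (le_max_left _ _)) (not_le.2 hx)

end
end

section
/- Let u, v ∈ H^s_loc(ℝ^d) ∩ L^∞(ℝ^d) and let Λ ⊆ ℝ^d be a bounded measurable set with all the quantities G₁(u,Λ), G₁(v,Λ) finite. (i) If u = v almost everywhere on ℝ^d∖Λ, then equality G₁(u∨v, Λ) + G₁(u∧v, Λ) = G₁(u, Λ) + G₁(v, Λ) holds if and only if u ≤ v almost everywhere on Λ or v ≤ u almost everywhere on Λ. (ii) If u ≤ v almost everywhere on ℝ^d∖Λ and u < v on some open subset of ℝ^d∖Λ of positive measure, then equality holds if and only if u ≤ v almost everywhere on Λ. -/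
open MeasureTheory Set Filter Topology
open scoped ENNReal Topology NNReal

noncomputable section

/-! ### Auxiliary machinery for statement6 -/

section Aux6

/-- The kernel `|x-y|^{-(d+2s)}`'s denominator, as a function on the product. -/
def ker (d : ℕ) (s : ℝ) (z : Rd d × Rd d) : ℝ := ‖z.1 - z.2‖ ^ ((d : ℝ) + 2 * s)

/-- Product form of the Gagliardo integrand. -/
def qq (d : ℕ) (s : ℝ) (w w' : Rd d → ℝ) (z : Rd d × Rd d) : ℝ≥0∞ :=
  ENNReal.ofReal ((w z.1 - w' z.2) ^ 2 / ker d s z)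

/-- The submodularity defect integrand. -/
def df (d : ℕ) (s : ℝ) (u v : Rd d → ℝ) (z : Rd d × Rd d) : ℝ≥0∞ :=
  ENNReal.ofReal ((2 * (max (u z.1 - v z.1) 0 * max (v z.2 - u z.2) 0 +
    max (v z.1 - u z.1) 0 * max (u z.2 - v z.2) 0)) / ker d s z)

lemma ker_nonneg (d : ℕ) (s : ℝ) (z : Rd d × Rd d) : 0 ≤ ker d s z :=
  Real.rpow_nonneg (norm_nonneg _) _

lemma ker_pos (d : ℕ) (s : ℝ) {z : Rd d × Rd d} (hz : z.1 ≠ z.2) : 0 < ker d s z :=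
  Real.rpow_pos_of_pos (by rw [norm_pos_iff]; exact sub_ne_zero.2 hz) _

lemma continuous_ker (d : ℕ) {s : ℝ} (hs : 0 ≤ s) : Continuous (ker d s) :=
  (Real.continuous_rpow_const (by positivity)).comp ((continuous_fst.sub continuous_snd).norm)

lemma measurable_ker (d : ℕ) {s : ℝ} (hs : 0 ≤ s) : Measurable (ker d s) :=
  (continuous_ker d hs).measurable

lemma measurable_qq {d : ℕ} {s : ℝ} (hs : 0 ≤ s) {w w' : Rd d → ℝ} (hw : Measurable w)
    (hw' : Measurable w') : Measurable (qq d s w w') :=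
  (((((hw.comp measurable_fst).sub (hw'.comp measurable_snd)).pow_const 2).div
    (measurable_ker d hs))).ennreal_ofReal

lemma measurable_df {d : ℕ} {s : ℝ} (hs : 0 ≤ s) {u v : Rd d → ℝ} (hu : Measurable u)
    (hv : Measurable v) : Measurable (df d s u v) := by
  apply Measurable.ennreal_ofReal
  apply Measurable.div _ (measurable_ker d hs)
  apply Measurable.const_mul
  exact ((((hu.comp measurable_fst).sub (hv.comp measurable_fst)).max measurable_const).mul
    (((hv.comp measurable_snd).sub (hu.comp measurable_snd)).max measurable_const)).add
    ((((hv.comp measurable_fst).sub (hu.comp measurable_fst)).max measurable_const).mul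
    (((hu.comp measurable_snd).sub (hv.comp measurable_snd)).max measurable_const))

lemma df_swap (d : ℕ) (s : ℝ) (u v : Rd d → ℝ) : df d s u v = df d s v u := by
  funext z; unfold df; congr 1; ring

theorem alg_key (a b c e : ℝ) :
    (max a b - max c e)^2 + (min a b - min c e)^2
      + 2*(max (a-b) 0 * max (e-c) 0 + max (b-a) 0 * max (c-e) 0)
      = (a-c)^2 + (b-e)^2 := by
  rcases le_total a b with h|h <;> rcases le_total c e with h'|h'
  · rw [max_eq_right h, max_eq_right h', min_eq_left h, min_eq_left h',
        max_eq_right (sub_nonpos.2 h), max_eq_left (sub_nonneg.2 h'),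
        max_eq_left (sub_nonneg.2 h), max_eq_right (sub_nonpos.2 h')]; ring
  · rw [max_eq_right h, max_eq_left h', min_eq_left h, min_eq_right h',
        max_eq_right (sub_nonpos.2 h), max_eq_right (sub_nonpos.2 h'),
        max_eq_left (sub_nonneg.2 h), max_eq_left (sub_nonneg.2 h')]; ring
  · rw [max_eq_left h, max_eq_right h', min_eq_right h, min_eq_left h',
        max_eq_left (sub_nonneg.2 h), max_eq_left (sub_nonneg.2 h'),
        max_eq_right (sub_nonpos.2 h), max_eq_right (sub_nonpos.2 h')]; ring
  · rw [max_eq_left h, max_eq_left h', min_eq_right h, min_eq_right h',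
        max_eq_left (sub_nonneg.2 h), max_eq_right (sub_nonpos.2 h'),
        max_eq_right (sub_nonpos.2 h), max_eq_left (sub_nonneg.2 h')]; ring

lemma ofReal_div_add3 {A B C X Y k : ℝ} (hA : 0 ≤ A) (hB : 0 ≤ B) (hC : 0 ≤ C)
    (hX : 0 ≤ X) (hY : 0 ≤ Y) (hk : 0 ≤ k) (h : A + B + C = X + Y) :
    ENNReal.ofReal (A / k) + ENNReal.ofReal (B / k) + ENNReal.ofReal (C / k)
      = ENNReal.ofReal (X / k) + ENNReal.ofReal (Y / k) := by
  rw [← ENNReal.ofReal_add (div_nonneg hA hk) (div_nonneg hB hk), ← add_div,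
      ← ENNReal.ofReal_add (div_nonneg (add_nonneg hA hB) hk) (div_nonneg hC hk), ← add_div, h,
      add_div, ENNReal.ofReal_add (div_nonneg hX hk) (div_nonneg hY hk)]

lemma qq_pointwise (d : ℕ) (s : ℝ) (u v : Rd d → ℝ) (z : Rd d × Rd d) :
    qq d s (fun x => max (u x) (v x)) (fun x => max (u x) (v x)) z
      + qq d s (fun x => min (u x) (v x)) (fun x => min (u x) (v x)) z
      + df d s u v z
      = qq d s u u z + qq d s v v z := by
  unfold qq df
  refine ofReal_div_add3 (sq_nonneg _) (sq_nonneg _) ?_ (sq_nonneg _) (sq_nonneg _)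
    (ker_nonneg d s z) (alg_key (u z.1) (v z.1) (u z.2) (v z.2))
  have h1 : (0:ℝ) ≤ max (u z.1 - v z.1) 0 := le_max_right _ _
  have h2 : (0:ℝ) ≤ max (v z.2 - u z.2) 0 := le_max_right _ _
  have h3 : (0:ℝ) ≤ max (v z.1 - u z.1) 0 := le_max_right _ _
  have h4 : (0:ℝ) ≤ max (u z.2 - v z.2) 0 := le_max_right _ _
  positivity

lemma gag_eq_prod {d : ℕ} {s : ℝ} (hs : 0 ≤ s) {w : Rd d → ℝ} (hw : Measurable w)
    (S : Set (Rd d)) :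
    gag d s w S = ∫⁻ z, qq d s w w z ∂((volume.restrict S).prod (volume.restrict S)) :=
  (lintegral_prod _ (measurable_qq hs hw hw).aemeasurable).symm

lemma interW_eq_prod {d : ℕ} {s : ℝ} (hs : 0 ≤ s) {w w' : Rd d → ℝ} (hw : Measurable w)
    (hw' : Measurable w') (S T : Set (Rd d)) :
    interW d s w S w' T
      = 2 * ∫⁻ z, qq d s w w' z ∂((volume.restrict S).prod (volume.restrict T)) := by
  unfold interW
  rw [lintegral_prod _ (measurable_qq hs hw hw').aemeasurable]
  rfl

lemma bigW_eq_prod {d : ℕ} {s : ℝ} (hs : 0 ≤ s) {w : Rd d → ℝ} (hw : Measurable w)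
    (S : Set (Rd d)) :
    bigW d s w S
      = 2 * ∫⁻ z, qq d s w w z ∂((volume.restrict S).prod (volume.restrict Sᶜ)) :=
  interW_eq_prod hs hw hw S Sᶜ

lemma prod_identity {d : ℕ} {s : ℝ} (hs : 0 ≤ s) {u v : Rd d → ℝ} (hu : Measurable u)
    (hv : Measurable v) (π : Measure (Rd d × Rd d)) :
    (∫⁻ z, qq d s (fun x => max (u x) (v x)) (fun x => max (u x) (v x)) z ∂π)
      + (∫⁻ z, qq d s (fun x => min (u x) (v x)) (fun x => min (u x) (v x)) z ∂π)
      + (∫⁻ z, df d s u v z ∂π)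
      = (∫⁻ z, qq d s u u z ∂π) + (∫⁻ z, qq d s v v z ∂π) := by
  have hM : Measurable fun x => max (u x) (v x) := hu.max hv
  have hm : Measurable fun x => min (u x) (v x) := hu.min hv
  rw [← lintegral_add_left (measurable_qq hs hM hM),
      ← lintegral_add_left (f := fun z => qq d s (fun x => max (u x) (v x)) (fun x => max (u x) (v x)) z
        + qq d s (fun x => min (u x) (v x)) (fun x => min (u x) (v x)) z)
        ((measurable_qq hs hM hM).add (measurable_qq hs hm hm)),
      ← lintegral_add_left (measurable_qq hs hu hu)]
  exact lintegral_congr fun z => qq_pointwise d s u v z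

/-! EReal plumbing -/

lemma ennreal_coe_eq_real {a : ℝ≥0∞} (ha : a ≠ ⊤) :
    (a : EReal) = ((a.toReal : ℝ) : EReal) := by
  have h := EReal.coe_toReal (x := (a : EReal))
    (by simpa [EReal.coe_ennreal_eq_top_iff] using ha) (EReal.coe_ennreal_ne_bot a)
  rw [EReal.toReal_coe_ennreal] at h
  exact h.symm

lemma K1e_eq_coe {d : ℕ} {s : ℝ} {W : ℝ → ℝ} {θ : ℝ} {g₁ w : Rd d → ℝ} {Λ : Set (Rd d)}
    (ha : gag d s w Λ ≠ ⊤) :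
    K1e d s W θ g₁ w Λ = ((K1r d s W θ g₁ w Λ : ℝ) : EReal) := by
  unfold K1e K1r
  rw [ennreal_coe_eq_real ha, ← EReal.coe_add, ← EReal.coe_sub]

lemma G1e_eq_coe {d : ℕ} {s : ℝ} {W : ℝ → ℝ} {θ : ℝ} {g₁ w : Rd d → ℝ} {Λ : Set (Rd d)}
    (ha : gag d s w Λ ≠ ⊤) (hb : bigW d s w Λ ≠ ⊤) :
    G1e d s W θ g₁ w Λ = ((G1r d s W θ g₁ w Λ : ℝ) : EReal) := by
  unfold G1e G1r
  rw [K1e_eq_coe ha, ennreal_coe_eq_real hb, ← EReal.coe_add]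

lemma fin_of_G1e_ne_top {d : ℕ} {s : ℝ} {W : ℝ → ℝ} {θ : ℝ} {g₁ w : Rd d → ℝ}
    {Λ : Set (Rd d)} (h : G1e d s W θ g₁ w Λ ≠ ⊤) :
    gag d s w Λ ≠ ⊤ ∧ bigW d s w Λ ≠ ⊤ := by
  constructor
  · intro hg
    apply h
    unfold G1e K1e
    rw [hg, EReal.coe_ennreal_top, EReal.top_add_coe, EReal.top_sub_coe,
        EReal.top_add_of_ne_bot (EReal.coe_ennreal_ne_bot _)]
  · intro hb
    apply h
    unfold G1e
    rw [hb, EReal.coe_ennreal_top, EReal.add_top_of_ne_bot]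
    unfold K1e
    rw [sub_eq_add_neg, ← EReal.coe_neg]
    simp only [ne_eq, EReal.add_eq_bot_iff, EReal.coe_ennreal_ne_bot, EReal.coe_ne_bot,
      or_self, not_false_eq_true]

/-! Vanishing lemmas for the defect integral -/

lemma df_zero_of_le {d : ℕ} {s : ℝ} {u v : Rd d → ℝ} {z : Rd d × Rd d}
    (h1 : u z.1 ≤ v z.1) (h2 : u z.2 ≤ v z.2) : df d s u v z = 0 := by
  unfold df
  rw [max_eq_right (sub_nonpos.2 h1), max_eq_right (sub_nonpos.2 h2)]
  simp

lemma df_zero_of_eq_snd {d : ℕ} {s : ℝ} {u v : Rd d → ℝ} {z : Rd d × Rd d}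
    (h2 : u z.2 = v z.2) : df d s u v z = 0 := by
  unfold df
  rw [h2]
  simp

lemma df_pos {d : ℕ} {s : ℝ} {u v : Rd d → ℝ} {z : Rd d × Rd d}
    (h1 : v z.1 < u z.1) (h2 : u z.2 < v z.2) (hz : z.1 ≠ z.2) : 0 < df d s u v z := by
  unfold df
  apply ENNReal.ofReal_pos.2
  apply div_pos _ (ker_pos d s hz)
  have t1 : (0:ℝ) < max (u z.1 - v z.1) 0 := lt_max_iff.2 (Or.inl (sub_pos.2 h1))
  have t2 : (0:ℝ) < max (v z.2 - u z.2) 0 := lt_max_iff.2 (Or.inl (sub_pos.2 h2))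
  have t3 : (0:ℝ) ≤ max (v z.1 - u z.1) 0 := le_max_right _ _
  have t4 : (0:ℝ) ≤ max (u z.2 - v z.2) 0 := le_max_right _ _
  nlinarith

lemma lint_df_zero_of_ae_le {d : ℕ} {s : ℝ} (hs : 0 ≤ s) {u v : Rd d → ℝ}
    (hu : Measurable u) (hv : Measurable v) (μ ν : Measure (Rd d)) [SFinite ν]
    (h1 : ∀ᵐ x ∂μ, u x ≤ v x) (h2 : ∀ᵐ y ∂ν, u y ≤ v y) :
    ∫⁻ z, df d s u v z ∂(μ.prod ν) = 0 := by
  rw [lintegral_eq_zero_iff (measurable_df hs hu hv)]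
  have hN1 : μ {x | ¬ u x ≤ v x} = 0 := ae_iff.1 h1
  have hN2 : ν {y | ¬ u y ≤ v y} = 0 := ae_iff.1 h2
  have hsub : {z : Rd d × Rd d | ¬ df d s u v z = 0} ⊆
      ({x | ¬ u x ≤ v x} ×ˢ (Set.univ : Set (Rd d)))
        ∪ ((Set.univ : Set (Rd d)) ×ˢ {y | ¬ u y ≤ v y}) := by
    intro z hz
    by_contra hcon
    push_neg at hcon
    simp only [Set.mem_union, Set.mem_prod, Set.mem_setOf_eq, Set.mem_univ, and_true, true_and,
      not_or, not_not] at hcon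
    exact hz (df_zero_of_le (not_lt.1 hcon.1) (not_lt.1 hcon.2))
  have h0 : (μ.prod ν) {z : Rd d × Rd d | ¬ df d s u v z = 0} = 0 := by
    refine measure_mono_null hsub (measure_union_null ?_ ?_)
    · rw [Measure.prod_prod, hN1, zero_mul]
    · rw [Measure.prod_prod, hN2, mul_zero]
  exact ae_iff.2 h0

lemma lint_df_zero_of_ae_eq_snd {d : ℕ} {s : ℝ} (hs : 0 ≤ s) {u v : Rd d → ℝ}
    (hu : Measurable u) (hv : Measurable v) (μ ν : Measure (Rd d)) [SFinite ν]
    (h2 : ∀ᵐ y ∂ν, u y = v y) :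
    ∫⁻ z, df d s u v z ∂(μ.prod ν) = 0 := by
  rw [lintegral_eq_zero_iff (measurable_df hs hu hv)]
  have hN2 : ν {y | ¬ u y = v y} = 0 := ae_iff.1 h2
  have hsub : {z : Rd d × Rd d | ¬ df d s u v z = 0} ⊆
      ((Set.univ : Set (Rd d)) ×ˢ {y | ¬ u y = v y}) := by
    intro z hz
    by_contra hcon
    simp only [Set.mem_prod, Set.mem_univ, true_and, Set.mem_setOf_eq, not_not] at hcon
    exact hz (df_zero_of_eq_snd hcon)
  have h0 : (μ.prod ν) {z : Rd d × Rd d | ¬ df d s u v z = 0} = 0 := by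
    refine measure_mono_null hsub ?_
    rw [Measure.prod_prod, hN2, mul_zero]
  exact ae_iff.2 h0

end Aux6


section Aux6b

lemma nontrivial_Rd {d : ℕ} (hd : 1 ≤ d) : Nontrivial (Rd d) := by
  haveI : NeZero d := ⟨by omega⟩
  infer_instance

lemma prod_diag_null {d : ℕ} (hd : 1 ≤ d) (μ ν : Measure (Rd d)) [SFinite ν]
    (hν : ν ≤ volume) : (μ.prod ν) {z : Rd d × Rd d | z.1 = z.2} = 0 := by
  haveI : Nontrivial (Rd d) := nontrivial_Rd hd
  have hm : MeasurableSet {z : Rd d × Rd d | z.1 = z.2} :=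
    measurableSet_eq_fun measurable_fst measurable_snd
  rw [Measure.prod_apply hm]
  have hfib : ∀ x : Rd d, ν (Prod.mk x ⁻¹' {z : Rd d × Rd d | z.1 = z.2}) = 0 := by
    intro x
    have hset : Prod.mk x ⁻¹' {z : Rd d × Rd d | z.1 = z.2} = {x} := by
      ext y; simp [eq_comm]
    rw [hset]
    exact le_antisymm ((Measure.le_iff'.1 hν {x}).trans_eq (measure_singleton x)) zero_le
  rw [lintegral_congr hfib, lintegral_zero]

lemma dg_forces {d : ℕ} (hd : 1 ≤ d) {s : ℝ} (hs : 0 ≤ s) {u v : Rd d → ℝ}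
    (hu : Measurable u) (hv : Measurable v) (Λ : Set (Rd d))
    (h0 : ∫⁻ z, df d s u v z ∂((volume.restrict Λ).prod (volume.restrict Λ)) = 0) :
    (∀ᵐ x ∂volume.restrict Λ, u x ≤ v x) ∨ (∀ᵐ x ∂volume.restrict Λ, v x ≤ u x) := by
  by_contra hcon
  push_neg at hcon
  obtain ⟨hA, hB⟩ := hcon
  set μ := volume.restrict Λ with hμ
  have hA' : 0 < μ {x | v x < u x} := by
    have h1 : μ {x | ¬ u x ≤ v x} ≠ 0 := fun h => Filter.not_frequently.2
      (((ae_iff (p := fun x => u x ≤ v x)).2 h).mono fun x hx => not_lt.2 hx) hA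
    have : {x | ¬ u x ≤ v x} = {x | v x < u x} := by ext x; simp [not_le]
    rw [this] at h1
    exact pos_iff_ne_zero.2 h1
  have hB' : 0 < μ {x | u x < v x} := by
    have h1 : μ {x | ¬ v x ≤ u x} ≠ 0 := fun h => Filter.not_frequently.2
      (((ae_iff (p := fun x => v x ≤ u x)).2 h).mono fun x hx => not_lt.2 hx) hB
    have : {x | ¬ v x ≤ u x} = {x | u x < v x} := by ext x; simp [not_le]
    rw [this] at h1
    exact pos_iff_ne_zero.2 h1
  have hnull : (μ.prod μ) {z : Rd d × Rd d | ¬ df d s u v z = 0} = 0 :=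
    ae_iff.1 ((lintegral_eq_zero_iff (measurable_df hs hu hv)).1 h0)
  set E := (({x | v x < u x} ×ˢ {y | u y < v y}) \ {z : Rd d × Rd d | z.1 = z.2})
    with hE
  have hEsub : E ⊆ {z : Rd d × Rd d | ¬ df d s u v z = 0} := by
    intro z hz
    exact (df_pos hz.1.1 hz.1.2 hz.2).ne'
  have hE0 : (μ.prod μ) E = 0 := measure_mono_null hEsub hnull
  rw [hE, measure_diff_null (prod_diag_null hd μ μ Measure.restrict_le_self),
      Measure.prod_prod] at hE0
  exact (ENNReal.mul_pos hA'.ne' hB'.ne').ne' hE0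

lemma dw_forces {d : ℕ} (hd : 1 ≤ d) {s : ℝ} (hs : 0 ≤ s) {u v : Rd d → ℝ}
    (hu : Measurable u) (hv : Measurable v) {Λ O : Set (Rd d)}
    (hOopen : IsOpen O) (hOsub : O ⊆ Λᶜ) (hOpos : 0 < volume O)
    (hOlt : ∀ x ∈ O, u x < v x)
    (h0 : ∫⁻ z, df d s u v z ∂((volume.restrict Λ).prod (volume.restrict Λᶜ)) = 0) :
    ∀ᵐ x ∂volume.restrict Λ, u x ≤ v x := by
  haveI : Nontrivial (Rd d) := nontrivial_Rd hd
  rw [lintegral_prod _ (measurable_df hs hu hv).aemeasurable] at h0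
  have hFmeas : Measurable fun x => ∫⁻ y, df d s u v (x, y) ∂(volume.restrict Λᶜ) :=
    (measurable_df hs hu hv).lintegral_prod_right'
  have hae : ∀ᵐ x ∂volume.restrict Λ,
      (∫⁻ y, df d s u v (x, y) ∂(volume.restrict Λᶜ)) = 0 :=
    (lintegral_eq_zero_iff hFmeas).1 h0
  filter_upwards [hae] with x hx
  by_contra hlt
  push_neg at hlt
  have hmy : Measurable fun y => df d s u v (x, y) :=
    (measurable_df hs hu hv).comp measurable_prodMk_left
  have hposO : 0 < ∫⁻ y, df d s u v (x, y) ∂(volume.restrict O) := by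
    rw [lintegral_pos_iff_support hmy]
    have hsub : O \ {x} ⊆ Function.support fun y => df d s u v (x, y) := by
      intro y hy
      have hxy : x ≠ y := fun h => hy.2 (by simp [h.symm])
      exact (df_pos (z := ((x : Rd d), y)) hlt (hOlt y hy.1) hxy).ne'
    calc (0:ℝ≥0∞) < volume O := hOpos
      _ = volume (O \ {x}) := (measure_diff_null (measure_singleton x)).symm
      _ = (volume.restrict O) (O \ {x}) := by
          rw [Measure.restrict_apply (hOopen.measurableSet.diff (measurableSet_singleton x))]
          congr 1
          exact (Set.inter_eq_left.2 Set.diff_subset).symm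
      _ ≤ _ := measure_mono hsub
  have hle : (∫⁻ y, df d s u v (x, y) ∂(volume.restrict O))
      ≤ ∫⁻ y, df d s u v (x, y) ∂(volume.restrict Λᶜ) :=
    lintegral_mono' (Measure.restrict_mono hOsub le_rfl) le_rfl
  rw [hx] at hle
  exact hposO.ne' (nonpos_iff_eq_zero.1 hle)

lemma integrable_comp_bdd {d : ℕ} {Λ : Set (Rd d)} (hΛb : Bornology.IsBounded Λ)
    {f : Rd d → ℝ} (hf : Measurable f) {C : ℝ} (hC : ∀ x, |f x| ≤ C) :
    Integrable f (volume.restrict Λ) := by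
  haveI : IsFiniteMeasure (volume.restrict Λ) :=
    ⟨by rw [Measure.restrict_apply_univ]; exact hΛb.measure_lt_top⟩
  exact ⟨hf.aestronglyMeasurable,
    HasFiniteIntegral.of_bounded (C := C) (ae_of_all _ fun x => by
      simpa [Real.norm_eq_abs] using hC x)⟩

lemma exists_bound_cont (W : ℝ → ℝ) (hWc : Continuous W) (M : ℝ) :
    ∃ C, ∀ t : ℝ, |t| ≤ M → |W t| ≤ C := by
  obtain ⟨C, hC⟩ := (isCompact_Icc (a := -M) (b := M)).exists_bound_of_continuousOn
    hWc.continuousOn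
  refine ⟨C, fun t ht => ?_⟩
  have := hC t (by rw [Set.mem_Icc]; exact abs_le.1 ht)
  simpa [Real.norm_eq_abs] using this

end Aux6b


/-- equality cases in the submodularity inequality for `G₁`. -/
theorem statement6 (d : ℕ) (hd : 1 ≤ d) (s : ℝ) (hs : 0 < s ∧ s < 1)
    (W : ℝ → ℝ) (hWc : Continuous W) (hWpos : ∀ t, 0 ≤ W t)
    (θ : ℝ) (hθ : 0 ≤ θ)
    (g₁ : Rd d → ℝ) (hg : Measurable g₁) (Mg : ℝ) (hgb : ∀ x, |g₁ x| ≤ Mg)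
    (u v : Rd d → ℝ) (hu : Measurable u) (hv : Measurable v)
    (huHs : memHsLoc d s u) (hvHs : memHsLoc d s v)
    (Mu : ℝ) (hub : ∀ x, |u x| ≤ Mu) (Mv : ℝ) (hvb : ∀ x, |v x| ≤ Mv)
    (Λ : Set (Rd d)) (hΛm : MeasurableSet Λ) (hΛb : Bornology.IsBounded Λ)
    (hufin : G1e d s W θ g₁ u Λ ≠ ⊤) (hvfin : G1e d s W θ g₁ v Λ ≠ ⊤) :
    ((∀ᵐ x ∂volume.restrict Λᶜ, u x = v x) →
      (G1e d s W θ g₁ (fun x => max (u x) (v x)) Λ +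
          G1e d s W θ g₁ (fun x => min (u x) (v x)) Λ =
        G1e d s W θ g₁ u Λ + G1e d s W θ g₁ v Λ ↔
        (∀ᵐ x ∂volume.restrict Λ, u x ≤ v x) ∨ (∀ᵐ x ∂volume.restrict Λ, v x ≤ u x))) ∧
    ((∀ᵐ x ∂volume.restrict Λᶜ, u x ≤ v x) →
      (∃ O : Set (Rd d), IsOpen O ∧ O ⊆ Λᶜ ∧ 0 < volume O ∧ ∀ x ∈ O, u x < v x) →
      (G1e d s W θ g₁ (fun x => max (u x) (v x)) Λ +
          G1e d s W θ g₁ (fun x => min (u x) (v x)) Λ =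
        G1e d s W θ g₁ u Λ + G1e d s W θ g₁ v Λ ↔
        ∀ᵐ x ∂volume.restrict Λ, u x ≤ v x)) := by
  obtain ⟨hs0, hs1⟩ := hs
  have hs0' : (0:ℝ) ≤ s := hs0.le
  set Mf : Rd d → ℝ := fun x => max (u x) (v x) with hMfdef
  set mf : Rd d → ℝ := fun x => min (u x) (v x) with hmfdef
  have hM : Measurable Mf := hu.max hv
  have hm : Measurable mf := hu.min hv
  set μ := volume.restrict Λ with hμdef
  set ν := volume.restrict Λᶜ with hνdef
  set Dg := ∫⁻ z, df d s u v z ∂(μ.prod μ) with hDgdef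
  set Dw := ∫⁻ z, df d s u v z ∂(μ.prod ν) with hDwdef
  obtain ⟨hgu, hbu⟩ := fin_of_G1e_ne_top hufin
  obtain ⟨hgv, hbv⟩ := fin_of_G1e_ne_top hvfin
  -- ENNReal identities
  have Egag : gag d s Mf Λ + gag d s mf Λ + Dg = gag d s u Λ + gag d s v Λ := by
    rw [gag_eq_prod hs0' hM, gag_eq_prod hs0' hm, gag_eq_prod hs0' hu, gag_eq_prod hs0' hv]
    exact prod_identity hs0' hu hv (μ.prod μ)
  have EbigW : bigW d s Mf Λ + bigW d s mf Λ + 2 * Dw = bigW d s u Λ + bigW d s v Λ := by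
    rw [bigW_eq_prod hs0' hM Λ, bigW_eq_prod hs0' hm Λ, bigW_eq_prod hs0' hu Λ,
        bigW_eq_prod hs0' hv Λ]
    have h2 := prod_identity hs0' hu hv (μ.prod ν)
    calc 2 * (∫⁻ z, qq d s Mf Mf z ∂(μ.prod ν)) + 2 * (∫⁻ z, qq d s mf mf z ∂(μ.prod ν))
        + 2 * Dw
        = 2 * ((∫⁻ z, qq d s Mf Mf z ∂(μ.prod ν)) + (∫⁻ z, qq d s mf mf z ∂(μ.prod ν)) + Dw)
          := by ring
      _ = 2 * ((∫⁻ z, qq d s u u z ∂(μ.prod ν)) + (∫⁻ z, qq d s v v z ∂(μ.prod ν))) := by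
          rw [h2]
      _ = 2 * (∫⁻ z, qq d s u u z ∂(μ.prod ν)) + 2 * (∫⁻ z, qq d s v v z ∂(μ.prod ν)) := by
          ring
  -- finiteness of all pieces
  have hsum1 : gag d s u Λ + gag d s v Λ ≠ ⊤ := ENNReal.add_ne_top.2 ⟨hgu, hgv⟩
  have hsum2 : bigW d s u Λ + bigW d s v Λ ≠ ⊤ := ENNReal.add_ne_top.2 ⟨hbu, hbv⟩
  have hgM : gag d s Mf Λ ≠ ⊤ := by
    refine ne_top_of_le_ne_top hsum1 ?_; rw [← Egag]; exact le_add_right le_self_add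
  have hgm : gag d s mf Λ ≠ ⊤ := by
    refine ne_top_of_le_ne_top hsum1 ?_; rw [← Egag]; exact le_add_right le_add_self
  have hDgfin : Dg ≠ ⊤ := by
    refine ne_top_of_le_ne_top hsum1 ?_; rw [← Egag]; exact le_add_self
  have hbM : bigW d s Mf Λ ≠ ⊤ := by
    refine ne_top_of_le_ne_top hsum2 ?_; rw [← EbigW]; exact le_add_right le_self_add
  have hbm : bigW d s mf Λ ≠ ⊤ := by
    refine ne_top_of_le_ne_top hsum2 ?_; rw [← EbigW]; exact le_add_right le_add_self
  have hDwfin2 : 2 * Dw ≠ ⊤ := by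
    refine ne_top_of_le_ne_top hsum2 ?_; rw [← EbigW]; exact le_add_self
  have hDwfin : Dw ≠ ⊤ := by
    intro h
    rw [h, ENNReal.mul_top (by norm_num)] at hDwfin2
    exact hDwfin2 rfl
  -- real versions
  have rgag : (gag d s Mf Λ).toReal + (gag d s mf Λ).toReal + Dg.toReal
      = (gag d s u Λ).toReal + (gag d s v Λ).toReal := by
    have h := congrArg ENNReal.toReal Egag
    rwa [ENNReal.toReal_add (ENNReal.add_ne_top.2 ⟨hgM, hgm⟩) hDgfin,
        ENNReal.toReal_add hgM hgm, ENNReal.toReal_add hgu hgv] at h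
  have rbig : (bigW d s Mf Λ).toReal + (bigW d s mf Λ).toReal + 2 * Dw.toReal
      = (bigW d s u Λ).toReal + (bigW d s v Λ).toReal := by
    have h := congrArg ENNReal.toReal EbigW
    rwa [ENNReal.toReal_add (ENNReal.add_ne_top.2 ⟨hbM, hbm⟩) hDwfin2,
        ENNReal.toReal_add hbM hbm, ENNReal.toReal_add hbu hbv,
        ENNReal.toReal_mul, ENNReal.toReal_ofNat] at h
  -- real integral identities for the potential and field terms
  set MM := max Mu Mv with hMMdef
  have hub' : ∀ x, |u x| ≤ MM := fun x => (hub x).trans (le_max_left _ _)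
  have hvb' : ∀ x, |v x| ≤ MM := fun x => (hvb x).trans (le_max_right _ _)
  have hMb : ∀ x, |Mf x| ≤ MM := fun x => by
    rcases le_total (u x) (v x) with h|h
    · rw [hMfdef]; simp only [max_eq_right h]; exact hvb' x
    · rw [hMfdef]; simp only [max_eq_left h]; exact hub' x
  have hmb : ∀ x, |mf x| ≤ MM := fun x => by
    rcases le_total (u x) (v x) with h|h
    · rw [hmfdef]; simp only [min_eq_left h]; exact hub' x
    · rw [hmfdef]; simp only [min_eq_right h]; exact hvb' x
  obtain ⟨CW, hCW⟩ := exists_bound_cont W hWc MM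
  have iW : ∀ (w : Rd d → ℝ), Measurable w → (∀ x, |w x| ≤ MM) →
      Integrable (fun x => W (w x)) μ := fun w hw hwb =>
    integrable_comp_bdd hΛb (hWc.measurable.comp hw) (fun x => hCW _ (hwb x))
  have hMg0 : 0 ≤ Mg := (abs_nonneg _).trans (hgb 0)
  have ig : ∀ (w : Rd d → ℝ), Measurable w → (∀ x, |w x| ≤ MM) →
      Integrable (fun x => g₁ x * w x) μ := fun w hw hwb =>
    integrable_comp_bdd hΛb (hg.mul hw) (C := Mg * MM) (fun x => by
      rw [abs_mul]
      exact mul_le_mul (hgb x) (hwb x) (abs_nonneg _) hMg0)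
  have EW : (∫ x in Λ, W (Mf x)) + (∫ x in Λ, W (mf x))
      = (∫ x in Λ, W (u x)) + ∫ x in Λ, W (v x) := by
    rw [← integral_add (iW Mf hM hMb) (iW mf hm hmb), ← integral_add (iW u hu hub') (iW v hv hvb')]
    refine integral_congr_ae (ae_of_all _ fun x => ?_)
    rcases le_total (u x) (v x) with h|h
    · rw [hMfdef, hmfdef]; simp only [max_eq_right h, min_eq_left h]; ring
    · rw [hMfdef, hmfdef]; simp only [max_eq_left h, min_eq_right h]
  have Eg : (∫ x in Λ, g₁ x * Mf x) + (∫ x in Λ, g₁ x * mf x)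
      = (∫ x in Λ, g₁ x * u x) + ∫ x in Λ, g₁ x * v x := by
    rw [← integral_add (ig Mf hM hMb) (ig mf hm hmb), ← integral_add (ig u hu hub') (ig v hv hvb')]
    refine integral_congr_ae (ae_of_all _ fun x => ?_)
    rcases le_total (u x) (v x) with h|h
    · rw [hMfdef, hmfdef]; simp only [max_eq_right h, min_eq_left h]; ring
    · rw [hMfdef, hmfdef]; simp only [max_eq_left h, min_eq_right h]
  -- key equivalence
  have keyiff : (G1e d s W θ g₁ Mf Λ + G1e d s W θ g₁ mf Λ
      = G1e d s W θ g₁ u Λ + G1e d s W θ g₁ v Λ) ↔ (Dg = 0 ∧ Dw = 0) := by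
    rw [G1e_eq_coe hgM hbM, G1e_eq_coe hgm hbm, G1e_eq_coe hgu hbu, G1e_eq_coe hgv hbv,
        ← EReal.coe_add, ← EReal.coe_add, EReal.coe_eq_coe_iff]
    unfold G1r K1r
    have Egθ : θ * (∫ x in Λ, g₁ x * Mf x) + θ * (∫ x in Λ, g₁ x * mf x)
        = θ * (∫ x in Λ, g₁ x * u x) + θ * (∫ x in Λ, g₁ x * v x) := by
      linear_combination θ * Eg
    constructor
    · intro h
      have h1 : Dg.toReal + 2 * Dw.toReal = 0 := by linarith [rgag, rbig, EW, Egθ, h]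
      have h2 : Dg.toReal = 0 := by
        nlinarith [ENNReal.toReal_nonneg (a := Dg), ENNReal.toReal_nonneg (a := Dw)]
      have h3 : Dw.toReal = 0 := by
        nlinarith [ENNReal.toReal_nonneg (a := Dg), ENNReal.toReal_nonneg (a := Dw)]
      exact ⟨((ENNReal.toReal_eq_zero_iff Dg).1 h2).resolve_right hDgfin,
        ((ENNReal.toReal_eq_zero_iff Dw).1 h3).resolve_right hDwfin⟩
    · rintro ⟨h1, h2⟩
      have h1' : Dg.toReal = 0 := by rw [h1]; simp
      have h2' : Dw.toReal = 0 := by rw [h2]; simp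
      linarith [rgag, rbig, EW, Egθ]
  constructor
  · -- part (i)
    intro hae
    rw [keyiff]
    have hDw0 : Dw = 0 := lint_df_zero_of_ae_eq_snd hs0' hu hv μ ν hae
    constructor
    · rintro ⟨h1, _⟩
      exact dg_forces hd hs0' hu hv Λ h1
    · rintro (hle | hle)
      · exact ⟨lint_df_zero_of_ae_le hs0' hu hv μ μ hle hle, hDw0⟩
      · refine ⟨?_, hDw0⟩
        rw [hDgdef, df_swap d s u v]
        exact lint_df_zero_of_ae_le hs0' hv hu μ μ hle hle
  · -- part (ii)
    intro hae hO
    obtain ⟨O, hOopen, hOsub, hOpos, hOlt⟩ := hO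
    rw [keyiff]
    constructor
    · rintro ⟨_, h2⟩
      exact dw_forces hd hs0' hu hv hOopen hOsub hOpos hOlt h2
    · intro hle
      exact ⟨lint_df_zero_of_ae_le hs0' hu hv μ μ hle hle,
        lint_df_zero_of_ae_le hs0' hu hv μ ν hle hae⟩


end
end
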